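/- Let A be a Hopf algebra over ℂ with comultiplication Δ, counit ε and antipode S satisfying S ∘ S = id, and let h : A → ℂ be a two-sided invariant unital functional: h(1) = 1, (id ⊗ h)(Δ a) = h(a)·1 and (h ⊗ id)(Δ a) = h(a)·1 for all a. Let B be a complex vector space with a (right) corepresentation α : B → B ⊗ A ((α ⊗ id) ∘ α = (id ⊗ Δ) ∘ α and (id ⊗ ε) ∘ α = id), with adjoint α† : B ⊗ A → B defined by α†(ξ ⊗ a) = (id ⊗ h)( ((id ⊗ S)(α(ξ))) · (1 ⊗ a) ), and let N be a complex vector space with a left corepresentation π : N → A ⊗ N ((id ⊗ π) ∘ π = (Δ ⊗ id) ∘ π and (ε ⊗ id) ∘ π = id). Define E = (α† ⊗ id_N) ∘ (id_B ⊗ π) : B ⊗ N → B ⊗ N and M = { ω ∈ B ⊗ N : (α ⊗ id_N)(ω) = (id_B ⊗ π)(ω) in B ⊗ A ⊗ N }. Then (α ⊗ id_N) ∘ E = (id_B ⊗ π) ∘ E, so E maps B ⊗ N into M; E(ω) = ω for every ω ∈ M; and consequently E is an idempotent linear map whose range is exactly M. -/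

import Mathlib

/-!
Writing `α ξ = ∑ ξ₀ ⊗ ξ₁`, the adjoint is `α† (ξ ⊗ a) = ∑ h (S ξ₁ * a) ξ₀`. Coassociativity of `α`
and `S a₁ * a₂ = ε a` give `α† ∘ α = id`, while `α ∘ α† = (α† ⊗ id) ∘ (id ⊗ Δ)` reduces to the
strong invariance `∑ h (S c₂ * a) c₁ = ∑ h (S c * a₁) a₂` of `h`. In the convolution algebra
`Hom(A, A)` the right side `θ` satisfies `S * θ = h (S · a) 1` by left invariance, so
`θ = id * S * θ` is the left side. This uses `Δ ∘ S = (S ⊗ S) ∘ Δᵒᵖ`, which holds because in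
`Hom(A, A ⊗ A)` one has `Δ = ι₁ * ι₂`, so `(S ⊗ S) ∘ Δᵒᵖ = (ι₂ ∘ S) * (ι₁ ∘ S)` is a left inverse
of `Δ`, whereas `Δ ∘ S` is a right inverse.

With `E = (α† ⊗ id) ∘ (id ⊗ π)`, the second identity and coassociativity of `π` give
`(α ⊗ id) ∘ E = (id ⊗ π) ∘ E`, and on `M` the map `E` is `(α† ∘ α) ⊗ id = id`.
-/

open scoped TensorProduct RingTheory.LinearMap
open Coalgebra HopfAlgebra TensorProduct LinearMap WithConv
open Algebra.TensorProduct (includeLeft includeRight)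

section Coaction
variable {R A N : Type*} [CommSemiring R] [AddCommMonoid A] [Module R A]
  [AddCommMonoid N] [Module R N]

variable (B : Type*) [AddCommMonoid B] [Module R B] in
/-- The paper's `id_B ⊗ π`, reassociated to land in `(B ⊗ A) ⊗ N`. -/
noncomputable def lTensorCoaction (π : N →ₗ[R] A ⊗[R] N) : B ⊗[R] N →ₗ[R] (B ⊗[R] A) ⊗[R] N :=
  (TensorProduct.assoc R B A N).symm.toLinearMap ∘ₗ π.lTensor B

@[simp] lemma lTensorCoaction_tmul {B : Type*} [AddCommMonoid B] [Module R B]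
    (π : N →ₗ[R] A ⊗[R] N) (ξ : B) (x : N) :
    lTensorCoaction B π (ξ ⊗ₜ x) = (TensorProduct.assoc R B A N).symm (ξ ⊗ₜ π x) := rfl

variable {B C : Type*} [AddCommMonoid B] [Module R B] [AddCommMonoid C] [Module R C]

lemma lTensorCoaction_comp_rTensor (π : N →ₗ[R] A ⊗[R] N) (f : C →ₗ[R] B) :
    lTensorCoaction B π ∘ₗ f.rTensor N = (f.rTensor A).rTensor N ∘ₗ lTensorCoaction C π := by
  refine TensorProduct.ext' fun c x => ?_
  simp only [LinearMap.comp_apply, rTensor_tmul, lTensorCoaction_tmul]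
  induction π x using TensorProduct.induction_on with
  | zero => simp
  | tmul a n => simp
  | add s t hs ht => simp_all [tmul_add]

lemma lTensorCoaction_comp_lTensorCoaction [Coalgebra R A] {π : N →ₗ[R] A ⊗[R] N}
    (hπ : π.lTensor A ∘ₗ π = (TensorProduct.assoc R A A N).toLinearMap ∘ₗ comul.rTensor N ∘ₗ π) :
    lTensorCoaction (B ⊗[R] A) π ∘ₗ lTensorCoaction B π =
      (lTensorCoaction B comul).rTensor N ∘ₗ lTensorCoaction B π := by
  refine TensorProduct.ext' fun ξ x => ?_
  -- `T (a ⊗ (a' ⊗ n)) = ((ξ ⊗ a) ⊗ a') ⊗ n`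
  let T : A ⊗[R] (A ⊗[R] N) →ₗ[R] ((B ⊗[R] A) ⊗[R] A) ⊗[R] N :=
    (TensorProduct.assoc R _ A N).symm.toLinearMap ∘ₗ
      (TensorProduct.assoc R B A _).symm.toLinearMap ∘ₗ TensorProduct.mk R B _ ξ
  have hL : ∀ u : A ⊗[R] N,
      lTensorCoaction (B ⊗[R] A) π ((TensorProduct.assoc R B A N).symm (ξ ⊗ₜ u)) =
        T (π.lTensor A u) := by
    intro u
    induction u using TensorProduct.induction_on with
    | zero => simp
    | tmul a n => simp [T]
    | add s t hs ht => simp_all [tmul_add]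
  have hR : ∀ u : A ⊗[R] N,
      (lTensorCoaction B comul).rTensor N ((TensorProduct.assoc R B A N).symm (ξ ⊗ₜ u)) =
        T (TensorProduct.assoc R A A N (comul.rTensor N u)) := by
    intro u
    induction u using TensorProduct.induction_on with
    | zero => simp
    | tmul a n =>
      simp only [TensorProduct.assoc_symm_tmul, rTensor_tmul, lTensorCoaction_tmul]
      induction comul (R := R) a using TensorProduct.induction_on with
      | zero => simp
      | tmul a a' => simp [T]
      | add s t hs ht => simp_all [tmul_add, add_tmul]
    | add s t hs ht => simp_all [tmul_add]
  rw [LinearMap.comp_apply, LinearMap.comp_apply, lTensorCoaction_tmul, hL, hR]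
  exact congrArg T (LinearMap.congr_fun hπ x)

theorem rTensor_comp_rTensor_comp_lTensorCoaction [Coalgebra R A] {π : N →ₗ[R] A ⊗[R] N}
    {α : B →ₗ[R] B ⊗[R] A} {f : B ⊗[R] A →ₗ[R] B}
    (hf : α ∘ₗ f = f.rTensor A ∘ₗ lTensorCoaction B comul)
    (hπ : π.lTensor A ∘ₗ π = (TensorProduct.assoc R A A N).toLinearMap ∘ₗ comul.rTensor N ∘ₗ π) :
    α.rTensor N ∘ₗ f.rTensor N ∘ₗ lTensorCoaction B π =
      lTensorCoaction B π ∘ₗ f.rTensor N ∘ₗ lTensorCoaction B π := by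
  rw [← comp_assoc, ← rTensor_comp, hf, rTensor_comp, comp_assoc,
    ← lTensorCoaction_comp_lTensorCoaction hπ, ← comp_assoc, ← lTensorCoaction_comp_rTensor,
    comp_assoc]

end Coaction

lemma mul_lid_rTensor {R A : Type*} [CommSemiring R] [Semiring A] [Algebra R A]
    (h : A →ₗ[R] R) (x : A) (t : A ⊗[R] A) :
    x * TensorProduct.lid R A (h.rTensor A t) =
      TensorProduct.lid R A (h.rTensor A ((1 ⊗ₜ x) * t)) := by
  induction t using TensorProduct.induction_on with
  | zero => simp
  | tmul b c => simp
  | add s t hs ht => simp [mul_add, hs, ht]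

namespace HopfAlgebra
variable {R A : Type*} [CommSemiring R] [Semiring A] [HopfAlgebra R A]

lemma algHom_comp_antipode_convMul {B : Type*} [Semiring B] [Algebra R B] (f : A →ₐ[R] B) :
    toConv (f.toLinearMap ∘ₗ antipode R) * toConv f.toLinearMap = 1 := by
  have := algHom_comp_convMul_distrib f (toConv (antipode R)) (toConv LinearMap.id)
  simp only [comp_id, antipode_mul_id] at this
  rw [← toConv_ofConv (_ * _), ← this]
  ext; simp

lemma toConv_comul_eq :
    toConv (comul (R := R) (A := A)) =
      toConv (includeLeft : A →ₐ[R] A ⊗[R] A).toLinearMap *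
        toConv (includeRight : A →ₐ[R] A ⊗[R] A).toLinearMap := by
  ext a
  simp [(ℛ R a).convMul_apply, ← (ℛ R a).eq]

lemma toConv_map_antipode_comm_comul_eq :
    toConv (map (antipode R) (antipode R) ∘ₗ (TensorProduct.comm R A A).toLinearMap ∘ₗ comul) =
      toConv ((includeRight : A →ₐ[R] A ⊗[R] A).toLinearMap ∘ₗ antipode R) *
        toConv ((includeLeft : A →ₐ[R] A ⊗[R] A).toLinearMap ∘ₗ antipode R) := by
  ext a
  simp [(ℛ R a).convMul_apply, ← (ℛ R a).eq]

lemma map_antipode_comm_comul_convMul_comul :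
    toConv (map (antipode R) (antipode R) ∘ₗ (TensorProduct.comm R A A).toLinearMap ∘ₗ comul) *
      toConv (comul (R := R) (A := A)) = 1 := by
  rw [toConv_map_antipode_comm_comul_eq, toConv_comul_eq, mul_assoc,
    ← mul_assoc (toConv (includeLeft.toLinearMap ∘ₗ antipode R)), algHom_comp_antipode_convMul,
    one_mul, algHom_comp_antipode_convMul]

theorem comul_comp_antipode :
    comul ∘ₗ antipode R (A := A) =
      map (antipode R) (antipode R) ∘ₗ (TensorProduct.comm R A A).toLinearMap ∘ₗ comul := by
  apply toConv_injective
  rw [← one_mul (toConv (comul ∘ₗ antipode R (A := A))), ← map_antipode_comm_comul_convMul_comul,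
    mul_assoc, comul_right_inv, mul_one]

theorem comul_antipode (a : A) :
    comul (antipode R a) =
      TensorProduct.map (antipode R) (antipode R) (TensorProduct.comm R A A (comul a)) :=
  LinearMap.congr_fun comul_comp_antipode a

section Invariant
variable (h : A →ₗ[R] R)

noncomputable def haarPairing (a : A) : A →ₗ[R] R := h ∘ₗ mulRight R a ∘ₗ antipode R

/-- `haarSlice h a c = ∑ h (S c * a₁) a₂`. -/
noncomputable def haarSlice (a : A) : A →ₗ[R] A :=
  (TensorProduct.lid R A).toLinearMap ∘ₗ h.rTensor A ∘ₗ mulRight R (comul a) ∘ₗ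
    (includeLeft : A →ₐ[R] A ⊗[R] A).toLinearMap ∘ₗ antipode R

lemma haarSlice_apply {a : A} {ι : Type*} (r : Coalgebra.Repr R a ι) (c : A) :
    haarSlice h a c = ∑ i ∈ r.index, haarPairing h (r.left i) c • r.right i := by
  simp [haarSlice, haarPairing, ← r.eq, Finset.mul_sum]

variable {h} (hinv : ∀ a : A, TensorProduct.lid R A (h.rTensor A (comul a)) = h a • (1 : A))
include hinv

lemma antipode_convMul_haarSlice (a : A) :
    toConv (antipode R) * toConv (haarSlice h a) =
      toConv (Algebra.linearMap R A ∘ₗ haarPairing h a) := by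
  ext d
  have hS : comul (antipode R d) =
      ∑ i ∈ (ℛ R d).index, antipode R ((ℛ R d).right i) ⊗ₜ[R] antipode R ((ℛ R d).left i) := by
    rw [comul_antipode, ← (ℛ R d).eq]
    simp
  calc _ = TensorProduct.lid R A (h.rTensor A (comul (antipode R d) * comul a)) := by
        simp [(ℛ R d).convMul_apply, haarSlice, mul_lid_rTensor, hS, Finset.sum_mul, ← mul_assoc]
    _ = _ := by simp [← Bialgebra.comul_mul, hinv, haarPairing, Algebra.algebraMap_eq_smul_one]

/-- Strong invariance: `∑ h (S c₂ * a) c₁ = ∑ h (S c * a₁) a₂`. -/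
theorem rid_lTensor_haarPairing_comul (a c : A) :
    TensorProduct.rid R A ((haarPairing h a).lTensor A (comul c)) = haarSlice h a c := by
  have key : toConv LinearMap.id * toConv (Algebra.linearMap R A ∘ₗ haarPairing h a) =
      toConv (haarSlice h a) := by
    rw [← antipode_convMul_haarSlice hinv, ← mul_assoc, id_mul_antipode, one_mul]
  rw [← congr($key c), (ℛ R c).convMul_apply, ← (ℛ R c).eq]
  simp [Algebra.smul_def, Algebra.commutes]

end Invariant

section Adjoint
variable {B : Type*} [AddCommMonoid B] [Module R B] (h : A →ₗ[R] R)

noncomputable def haarForm : A ⊗[R] A →ₗ[R] R := h ∘ₗ mul' R A ∘ₗ (antipode R).rTensor A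

lemma haarForm_comp_comul (hh1 : h 1 = 1) : haarForm h ∘ₗ comul = counit (R := R) (A := A) := by
  ext a
  simp [haarForm, mul_antipode_rTensor_comul_apply, Algebra.algebraMap_eq_smul_one, hh1]

/-- The paper's `α†`. -/
noncomputable def coactionAdjoint (α : B →ₗ[R] B ⊗[R] A) : B ⊗[R] A →ₗ[R] B :=
  (TensorProduct.rid R B).toLinearMap ∘ₗ (haarForm h).lTensor B ∘ₗ
    (TensorProduct.assoc R B A A).toLinearMap ∘ₗ α.rTensor A

lemma coactionAdjoint_tmul (α : B →ₗ[R] B ⊗[R] A) (ξ : B) (a : A) :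
    coactionAdjoint h α (ξ ⊗ₜ a) = TensorProduct.rid R B ((haarPairing h a).lTensor B (α ξ)) := by
  simp only [coactionAdjoint, LinearMap.comp_apply, rTensor_tmul]
  induction α ξ using TensorProduct.induction_on with
  | zero => simp
  | tmul b c => simp [haarForm, haarPairing]
  | add s t hs ht => simp_all [add_tmul]

variable {h} {α : B →ₗ[R] B ⊗[R] A}

theorem coactionAdjoint_comp_self (hh1 : h 1 = 1)
    (hα_coassoc :
      (TensorProduct.assoc R B A A).toLinearMap ∘ₗ α.rTensor A ∘ₗ α = comul.lTensor B ∘ₗ α)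
    (hα_counit : (TensorProduct.rid R B).toLinearMap ∘ₗ counit.lTensor B ∘ₗ α = LinearMap.id) :
    coactionAdjoint h α ∘ₗ α = LinearMap.id := by
  rw [← hα_counit, ← haarForm_comp_comul h hh1, lTensor_comp]
  simp only [coactionAdjoint, comp_assoc, hα_coassoc]

theorem comp_coactionAdjoint
    (hinv : ∀ a : A, TensorProduct.lid R A (h.rTensor A (comul a)) = h a • (1 : A))
    (hα_coassoc :
      (TensorProduct.assoc R B A A).toLinearMap ∘ₗ α.rTensor A ∘ₗ α = comul.lTensor B ∘ₗ α) :
    α ∘ₗ coactionAdjoint h α = (coactionAdjoint h α).rTensor A ∘ₗ lTensorCoaction B comul := by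
  refine TensorProduct.ext' fun ξ a => ?_
  have hαξ : α.rTensor A (α ξ) = (TensorProduct.assoc R B A A).symm (comul.lTensor B (α ξ)) := by
    rw [LinearEquiv.eq_symm_apply]; exact congr($hα_coassoc ξ)
  have hL : ∀ y : B ⊗[R] A, α (TensorProduct.rid R B ((haarPairing h a).lTensor B y)) =
      TensorProduct.rid R _ ((haarPairing h a).lTensor _ (α.rTensor A y)) := by
    intro y
    induction y using TensorProduct.induction_on with
    | zero => simp
    | tmul b c => simp
    | add s t hs ht => simp_all
  have hM : ∀ y : B ⊗[R] A, TensorProduct.rid R _ ((haarPairing h a).lTensor _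
      ((TensorProduct.assoc R B A A).symm (comul.lTensor B y))) = (haarSlice h a).lTensor B y := by
    intro y
    induction y using TensorProduct.induction_on with
    | zero => simp
    | tmul b c =>
      rw [lTensor_tmul, lTensor_tmul, ← rid_lTensor_haarPairing_comul hinv, ← (ℛ R c).eq]
      simp [tmul_sum]
    | add s t hs ht => simp_all
  have hR : ∀ y : B ⊗[R] A, (haarSlice h a).lTensor B y = ∑ i ∈ (ℛ R a).index,
      TensorProduct.rid R B ((haarPairing h ((ℛ R a).left i)).lTensor B y) ⊗ₜ (ℛ R a).right i := by
    intro y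
    induction y using TensorProduct.induction_on with
    | zero => simp
    | tmul b c => simp [haarSlice_apply h (ℛ R a), tmul_sum, smul_tmul]
    | add s t hs ht => simp_all [Finset.sum_add_distrib, add_tmul]
  simp only [LinearMap.comp_apply, coactionAdjoint_tmul, hL, hαξ, hM, hR, lTensorCoaction_tmul,
    ← (ℛ R a).eq]
  simp [tmul_sum, coactionAdjoint_tmul]

end Adjoint
end HopfAlgebra

theorem stmt18_general
    (A : Type*) [Semiring A] [HopfAlgebra ℂ A]
    (h : A →ₗ[ℂ] ℂ) (hh1 : h 1 = 1)
    (hinvL : ∀ a : A,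
      (TensorProduct.lid ℂ A) ((LinearMap.rTensor A h) (Coalgebra.comul (R := ℂ) a)) =
        h a • (1 : A))
    (B : Type*) [AddCommGroup B] [Module ℂ B]
    (α : B →ₗ[ℂ] B ⊗[ℂ] A)
    (hαcoassoc : ∀ ξ : B,
      (TensorProduct.assoc ℂ B A A) ((LinearMap.rTensor A α) (α ξ)) =
        (LinearMap.lTensor B (Coalgebra.comul (R := ℂ))) (α ξ))
    (hαcounit : ∀ ξ : B,
      (TensorProduct.rid ℂ B) ((LinearMap.lTensor B (Coalgebra.counit (R := ℂ))) (α ξ)) = ξ)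
    (αdag : B ⊗[ℂ] A →ₗ[ℂ] B)
    (hαdag : ∀ (ξ : B) (a : A),
      αdag (ξ ⊗ₜ[ℂ] a) =
        (TensorProduct.rid ℂ B) ((LinearMap.lTensor B h)
          ((LinearMap.lTensor B (LinearMap.mulRight ℂ a))
            ((LinearMap.lTensor B (HopfAlgebra.antipode (R := ℂ))) (α ξ)))))
    (N : Type*) [AddCommGroup N] [Module ℂ N]
    (π : N →ₗ[ℂ] A ⊗[ℂ] N)
    (hπcoassoc : ∀ x : N,
      (LinearMap.lTensor A π) (π x) =
        (TensorProduct.assoc ℂ A A N) ((LinearMap.rTensor N (Coalgebra.comul (R := ℂ))) (π x))) :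
    let E : B ⊗[ℂ] N → B ⊗[ℂ] N := fun ω =>
      (LinearMap.rTensor N αdag)
        ((TensorProduct.assoc ℂ B A N).symm ((LinearMap.lTensor B π) ω));
    let M : Set (B ⊗[ℂ] N) := {ω |
      (LinearMap.rTensor N α) ω =
        (TensorProduct.assoc ℂ B A N).symm ((LinearMap.lTensor B π) ω)};
    (∀ ω : B ⊗[ℂ] N, E ω ∈ M) ∧
    (∀ ω ∈ M, E ω = ω) ∧
    (∀ ω : B ⊗[ℂ] N, E (E ω) = E ω) ∧
    Set.range E = M := by
  intro E M
  have hadj : αdag = coactionAdjoint h α := TensorProduct.ext' fun ξ a => by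
    rw [hαdag, coactionAdjoint_tmul, haarPairing, lTensor_comp, lTensor_comp]
    rfl
  have hleft : αdag ∘ₗ α = LinearMap.id := hadj ▸
    coactionAdjoint_comp_self hh1 (LinearMap.ext hαcoassoc) (LinearMap.ext hαcounit)
  have hright : α ∘ₗ αdag = αdag.rTensor A ∘ₗ lTensorCoaction B comul := hadj ▸
    comp_coactionAdjoint hinvL (LinearMap.ext hαcoassoc)
  have mem : ∀ ω, E ω ∈ M := fun ω =>
    LinearMap.congr_fun (rTensor_comp_rTensor_comp_lTensorCoaction hright
      (LinearMap.ext hπcoassoc)) ω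
  have fix : ∀ ω ∈ M, E ω = ω := fun ω hω => by
    change αdag.rTensor N (lTensorCoaction B π ω) = ω
    rw [← show α.rTensor N ω = lTensorCoaction B π ω from hω, ← LinearMap.comp_apply,
      ← rTensor_comp, hleft, rTensor_id, LinearMap.id_apply]
  exact ⟨mem, fix, fun ω => fix _ (mem ω),
    Set.Subset.antisymm (Set.range_subset_iff.2 mem) fun ω hω => ⟨ω, fix ω hω⟩⟩

/-- Let `A` be a Hopf algebra over ℂ with involutive antipode and a
two-sided invariant unital functional `h`, let `α : B → B ⊗ A` be a right corepresentation
with adjoint `α†(ξ ⊗ a) = (id ⊗ h)(((id ⊗ S)(α ξ))(1 ⊗ a))`, and let `π : N → A ⊗ N` be a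
left corepresentation.  Then `E = (α† ⊗ id) ∘ (id ⊗ π)` maps `B ⊗ N` into
`M = { ω : (α ⊗ id)ω = (id ⊗ π)ω }`, fixes `M`, and is an idempotent with range exactly `M`. -/
theorem stmt18
    (A : Type*) [Semiring A] [HopfAlgebra ℂ A]
    (hKac : ∀ a : A, HopfAlgebra.antipode (R := ℂ) (HopfAlgebra.antipode (R := ℂ) a) = a)
    (h : A →ₗ[ℂ] ℂ) (hh1 : h 1 = 1)
    (hinvR : ∀ a : A,
      (TensorProduct.rid ℂ A) ((LinearMap.lTensor A h) (Coalgebra.comul (R := ℂ) a)) =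
        h a • (1 : A))
    (hinvL : ∀ a : A,
      (TensorProduct.lid ℂ A) ((LinearMap.rTensor A h) (Coalgebra.comul (R := ℂ) a)) =
        h a • (1 : A))
    (B : Type*) [AddCommGroup B] [Module ℂ B]
    (α : B →ₗ[ℂ] B ⊗[ℂ] A)
    (hαcoassoc : ∀ ξ : B,
      (TensorProduct.assoc ℂ B A A) ((LinearMap.rTensor A α) (α ξ)) =
        (LinearMap.lTensor B (Coalgebra.comul (R := ℂ))) (α ξ))
    (hαcounit : ∀ ξ : B,
      (TensorProduct.rid ℂ B) ((LinearMap.lTensor B (Coalgebra.counit (R := ℂ))) (α ξ)) = ξ)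
    (αdag : B ⊗[ℂ] A →ₗ[ℂ] B)
    (hαdag : ∀ (ξ : B) (a : A),
      αdag (ξ ⊗ₜ[ℂ] a) =
        (TensorProduct.rid ℂ B) ((LinearMap.lTensor B h)
          ((LinearMap.lTensor B (LinearMap.mulRight ℂ a))
            ((LinearMap.lTensor B (HopfAlgebra.antipode (R := ℂ))) (α ξ)))))
    (N : Type*) [AddCommGroup N] [Module ℂ N]
    (π : N →ₗ[ℂ] A ⊗[ℂ] N)
    (hπcoassoc : ∀ x : N,
      (LinearMap.lTensor A π) (π x) =
        (TensorProduct.assoc ℂ A A N) ((LinearMap.rTensor N (Coalgebra.comul (R := ℂ))) (π x)))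
    (hπcounit : ∀ x : N,
      (TensorProduct.lid ℂ N) ((LinearMap.rTensor N (Coalgebra.counit (R := ℂ))) (π x)) = x) :
    let E : B ⊗[ℂ] N → B ⊗[ℂ] N := fun ω =>
      (LinearMap.rTensor N αdag)
        ((TensorProduct.assoc ℂ B A N).symm ((LinearMap.lTensor B π) ω));
    let M : Set (B ⊗[ℂ] N) := {ω |
      (LinearMap.rTensor N α) ω =
        (TensorProduct.assoc ℂ B A N).symm ((LinearMap.lTensor B π) ω)};
    (∀ ω : B ⊗[ℂ] N, E ω ∈ M) ∧
    (∀ ω ∈ M, E ω = ω) ∧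
    (∀ ω : B ⊗[ℂ] N, E (E ω) = E ω) ∧
    Set.range E = M :=
  stmt18_general A h hh1 hinvL B α hαcoassoc hαcounit αdag hαdag N π hπcoassoc
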